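/- Let n ≥ 1, T > 0, and let γ : [0,T] → ℝ be a smooth function with γ(t) > 0 for all t ∈ [0,T]. Let f : [0,T] × ℝⁿ → ℝ be smooth, ℤⁿ-periodic in the space variable, with 0 < f < 1 everywhere, satisfying ∂_t f = Δf − γ(t)·f·log f on [0,T] × ℝⁿ. Then for every t ∈ (0,T] and every x ∈ ℝⁿ: |∇(log f)(t,x)|² + (log f(t,x))/t ≤ 0. -/

import Mathlib

open Set
open scoped RealInnerProductSpace

noncomputable section

def e (n : ℕ) (i : Fin n) : EuclideanSpace ℝ (Fin n) := EuclideanSpace.single i 1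

namespace GradEst

variable {n : ℕ}

/-- partial derivative in direction `e n i`. -/
def pd (g : EuclideanSpace ℝ (Fin n) → ℝ) (i : Fin n) (x : EuclideanSpace ℝ (Fin n)) : ℝ :=
  fderiv ℝ g x (e n i)

def Psq (g : EuclideanSpace ℝ (Fin n) → ℝ) (x : EuclideanSpace ℝ (Fin n)) : ℝ :=
  ∑ i, (pd g i x) ^ 2

def lap (g : EuclideanSpace ℝ (Fin n) → ℝ) (x : EuclideanSpace ℝ (Fin n)) : ℝ :=
  ∑ i, pd (pd g i) i x

lemma contDiff_pd {g : EuclideanSpace ℝ (Fin n) → ℝ} (hg : ContDiff ℝ (⊤ : ℕ∞) g) (i : Fin n) :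
    ContDiff ℝ (⊤ : ℕ∞) (pd g i) :=
  (hg.fderiv_right (by simp)).clm_apply contDiff_const

lemma contDiff_Psq {g : EuclideanSpace ℝ (Fin n) → ℝ} (hg : ContDiff ℝ (⊤ : ℕ∞) g) :
    ContDiff ℝ (⊤ : ℕ∞) (Psq g) := by
  apply ContDiff.sum
  intro i _
  exact (contDiff_pd hg i).pow 2

lemma contDiff_lap {g : EuclideanSpace ℝ (Fin n) → ℝ} (hg : ContDiff ℝ (⊤ : ℕ∞) g) :
    ContDiff ℝ (⊤ : ℕ∞) (lap g) := by
  apply ContDiff.sum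
  intro i _
  exact contDiff_pd (contDiff_pd hg i) i

lemma pd_eq {g : EuclideanSpace ℝ (Fin n) → ℝ} {x : EuclideanSpace ℝ (Fin n)}
    {L : EuclideanSpace ℝ (Fin n) →L[ℝ] ℝ} (h : HasFDerivAt g L x) (i : Fin n) :
    pd g i x = L (e n i) := by
  rw [pd, h.fderiv]

/-- derivative of a finite sum -/
lemma pd_sum {ι : Type*} [Fintype ι] {g : ι → EuclideanSpace ℝ (Fin n) → ℝ}
    (hg : ∀ j, DifferentiableAt ℝ (g j) x) (i : Fin n) :
    pd (fun y => ∑ j, g j y) i x = ∑ j, pd (g j) i x := by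
  have h : HasFDerivAt (fun y => ∑ j, g j y) (∑ j, fderiv ℝ (g j) x) x :=
    HasFDerivAt.fun_sum fun j _ => (hg j).hasFDerivAt
  rw [pd_eq h]
  simp [pd]

/-- derivative of a sum of squares -/
lemma pd_sum_sq {ι : Type*} [Fintype ι] {g : ι → EuclideanSpace ℝ (Fin n) → ℝ}
    {x : EuclideanSpace ℝ (Fin n)}
    (hg : ∀ j, DifferentiableAt ℝ (g j) x) (i : Fin n) :
    pd (fun y => ∑ j, (g j y) ^ 2) i x = 2 * ∑ j, g j x * pd (g j) i x := by
  have h : HasFDerivAt (fun y => ∑ j, (g j y) ^ 2)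
      (∑ j, (g j x • fderiv ℝ (g j) x + g j x • fderiv ℝ (g j) x)) x := by
    apply HasFDerivAt.fun_sum
    intro j _
    simpa [pow_two] using ((hg j).hasFDerivAt).fun_mul ((hg j).hasFDerivAt)
  rw [pd_eq h]
  simp [pd, Finset.mul_sum]
  ring_nf

/-- second derivative as iterated fderiv -/
lemma pd_pd_eq_snd {g : EuclideanSpace ℝ (Fin n) → ℝ} (hg : ContDiff ℝ (⊤ : ℕ∞) g)
    (x : EuclideanSpace ℝ (Fin n)) (i j : Fin n) :
    pd (pd g j) i x = fderiv ℝ (fderiv ℝ g) x (e n i) (e n j) := by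
  have hd : DifferentiableAt ℝ (fderiv ℝ g) x :=
    ((hg.fderiv_right (m := (⊤ : ℕ∞)) (by simp)).differentiable (by simp)) x
  have : pd g j = fun y => (fderiv ℝ g y) (e n j) := rfl
  rw [pd, this, fderiv_clm_apply hd (differentiableAt_const _)]
  simp

/-- Clairaut / symmetry of second derivatives. -/
lemma pd_comm {g : EuclideanSpace ℝ (Fin n) → ℝ} (hg : ContDiff ℝ (⊤ : ℕ∞) g)
    (x : EuclideanSpace ℝ (Fin n)) (i j : Fin n) :
    pd (pd g j) i x = pd (pd g i) j x := by
  rw [pd_pd_eq_snd hg x i j, pd_pd_eq_snd hg x j i]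
  exact (hg.contDiffAt.isSymmSndFDerivAt (by rw [minSmoothness_of_isRCLikeNormedField]; exact WithTop.coe_le_coe.mpr le_top)).eq (e n i) (e n j)

section LogChain

variable {n : ℕ} {g : EuclideanSpace ℝ (Fin n) → ℝ}

lemma pd_log (hg : ContDiff ℝ (⊤ : ℕ∞) g) (hpos : ∀ y, 0 < g y)
    (x : EuclideanSpace ℝ (Fin n)) (i : Fin n) :
    pd (fun y => Real.log (g y)) i x = (g x)⁻¹ * pd g i x := by
  have h : HasFDerivAt (fun y => Real.log (g y)) ((g x)⁻¹ • fderiv ℝ g x) x :=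
    ((hg.differentiable (by simp) x).hasFDerivAt).log (hpos x).ne'
  rw [pd_eq h]
  simp [pd]

lemma pd_pd_log (hg : ContDiff ℝ (⊤ : ℕ∞) g) (hpos : ∀ y, 0 < g y)
    (x : EuclideanSpace ℝ (Fin n)) (i j : Fin n) :
    pd (pd (fun y => Real.log (g y)) j) i x
      = (g x)⁻¹ * pd (pd g j) i x - ((g x)⁻¹) ^ 2 * (pd g i x * pd g j x) := by
  have hfun : pd (fun y => Real.log (g y)) j = fun y => (g y)⁻¹ * pd g j y := by
    funext y; exact pd_log hg hpos y j
  have hdg : DifferentiableAt ℝ g x := hg.differentiable (by simp) x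
  have hdpj : DifferentiableAt ℝ (pd g j) x := (contDiff_pd hg j).differentiable (by simp) x
  have hinv : HasFDerivAt (fun y => (g y)⁻¹) (-((g x) ^ 2)⁻¹ • fderiv ℝ g x) x := by
    have := (hasDerivAt_inv (hpos x).ne').comp_hasFDerivAt x (hdg.hasFDerivAt)
    simpa [Function.comp_def] using this
  have h : HasFDerivAt (fun y => (g y)⁻¹ * pd g j y)
      ((g x)⁻¹ • fderiv ℝ (pd g j) x + pd g j x • (-((g x) ^ 2)⁻¹ • fderiv ℝ g x)) x :=
    hinv.mul hdpj.hasFDerivAt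
  rw [hfun, pd_eq h]
  simp only [ContinuousLinearMap.add_apply, ContinuousLinearMap.smul_apply, smul_eq_mul]
  have : ((g x) ^ 2)⁻¹ = ((g x)⁻¹) ^ 2 := by
    rw [inv_pow]
  rw [this]; unfold pd; ring

lemma Psq_log (hg : ContDiff ℝ (⊤ : ℕ∞) g) (hpos : ∀ y, 0 < g y)
    (x : EuclideanSpace ℝ (Fin n)) :
    Psq (fun y => Real.log (g y)) x = ((g x)⁻¹) ^ 2 * Psq g x := by
  unfold Psq
  rw [Finset.mul_sum]
  congr 1; funext i
  rw [pd_log hg hpos x i]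
  ring

lemma lap_log (hg : ContDiff ℝ (⊤ : ℕ∞) g) (hpos : ∀ y, 0 < g y)
    (x : EuclideanSpace ℝ (Fin n)) :
    lap (fun y => Real.log (g y)) x = (g x)⁻¹ * lap g x - ((g x)⁻¹) ^ 2 * Psq g x := by
  unfold lap Psq
  have : ∀ i : Fin n, pd (pd (fun y => Real.log (g y)) i) i x
      = (g x)⁻¹ * pd (pd g i) i x - ((g x)⁻¹) ^ 2 * (pd g i x) ^ 2 := by
    intro i
    rw [pd_pd_log hg hpos x i i]; ring
  rw [Finset.sum_congr rfl fun i _ => this i, Finset.sum_sub_distrib,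
    ← Finset.mul_sum, ← Finset.mul_sum]

end LogChain

section Linear

variable {n : ℕ}

lemma pd_const_mul_add {A B : EuclideanSpace ℝ (Fin n) → ℝ} (c : ℝ)
    (hA : DifferentiableAt ℝ A x) (hB : DifferentiableAt ℝ B x) (i : Fin n) :
    pd (fun y => c * A y + B y) i x = c * pd A i x + pd B i x := by
  have h : HasFDerivAt (fun y => c * A y + B y) (c • fderiv ℝ A x + fderiv ℝ B x) x :=
    ((hA.hasFDerivAt).const_mul c).add hB.hasFDerivAt
  rw [pd_eq h]; simp [pd]

lemma lap_const_mul_add {A B : EuclideanSpace ℝ (Fin n) → ℝ} (c : ℝ)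
    (hA : ContDiff ℝ (⊤ : ℕ∞) A) (hB : ContDiff ℝ (⊤ : ℕ∞) B) (x : EuclideanSpace ℝ (Fin n)) :
    lap (fun y => c * A y + B y) x = c * lap A x + lap B x := by
  unfold lap
  have hfun : ∀ i : Fin n, pd (fun y => c * A y + B y) i
      = fun y => c * pd A i y + pd B i y := by
    intro i; funext y
    exact pd_const_mul_add c (hA.differentiable (by simp) y) (hB.differentiable (by simp) y) i
  have : ∀ i : Fin n, pd (pd (fun y => c * A y + B y) i) i x
      = c * pd (pd A i) i x + pd (pd B i) i x := by
    intro i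
    rw [hfun i]
    exact pd_const_mul_add c ((contDiff_pd hA i).differentiable (by simp) x)
      ((contDiff_pd hB i).differentiable (by simp) x) i
  rw [Finset.sum_congr rfl fun i _ => this i, Finset.sum_add_distrib, ← Finset.mul_sum]

end Linear

section Bochner

variable {n : ℕ} {g : EuclideanSpace ℝ (Fin n) → ℝ}

lemma pd_Psq (hg : ContDiff ℝ (⊤ : ℕ∞) g) (x : EuclideanSpace ℝ (Fin n)) (i : Fin n) :
    pd (Psq g) i x = 2 * ∑ j, pd g j x * pd (pd g j) i x := by
  unfold Psq
  exact pd_sum_sq (fun j => (contDiff_pd hg j).differentiable (by simp) x) i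

/-- Bochner formula on flat space. -/
lemma lap_Psq (hg : ContDiff ℝ (⊤ : ℕ∞) g) (x : EuclideanSpace ℝ (Fin n)) :
    lap (Psq g) x = 2 * (∑ i, ∑ j, (pd (pd g j) i x) ^ 2)
      + 2 * ∑ j, pd g j x * pd (lap g) j x := by
  unfold lap
  have hfun : ∀ i : Fin n, pd (Psq g) i = fun y => 2 * ∑ j, pd g j y * pd (pd g j) i y := by
    intro i; funext y; exact pd_Psq hg y i
  have hmain : ∀ i : Fin n, pd (pd (Psq g) i) i x
      = 2 * ∑ j, (pd (pd g j) i x * pd (pd g j) i x + pd g j x * pd (pd (pd g j) i) i x) := by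
    intro i
    rw [hfun i]
    have h : HasFDerivAt (fun y => 2 * ∑ j, pd g j y * pd (pd g j) i y)
        ((2:ℝ) • ∑ j, (pd g j x • fderiv ℝ (pd (pd g j) i) x
          + pd (pd g j) i x • fderiv ℝ (pd g j) x)) x := by
      apply HasFDerivAt.const_mul
      apply HasFDerivAt.fun_sum
      intro j _
      exact ((contDiff_pd hg j).differentiable (by simp) x).hasFDerivAt.mul
        ((contDiff_pd (contDiff_pd hg j) i).differentiable (by simp) x).hasFDerivAt
    rw [pd_eq h]
    simp only [ContinuousLinearMap.smul_apply, ContinuousLinearMap.sum_apply,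
      ContinuousLinearMap.add_apply, smul_eq_mul, Finset.mul_sum]
    apply Finset.sum_congr rfl
    intro j _
    unfold pd; ring
  rw [Finset.sum_congr rfl fun i _ => hmain i]
  have hswap : ∀ i j : Fin n, pd (pd (pd g j) i) i x = pd (pd (pd g i) i) j x := by
    intro i j
    have h1 : pd (pd g j) i = pd (pd g i) j := by
      funext y; exact pd_comm hg y i j
    rw [h1, pd_comm (contDiff_pd hg i) x i j]
  have hlapswap : ∀ j : Fin n, ∑ i, pd (pd (pd g j) i) i x = pd (lap g) j x := by
    intro j
    rw [Finset.sum_congr rfl fun i _ => hswap i j]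
    unfold lap
    rw [pd_sum (fun i => (contDiff_pd (contDiff_pd hg i) i).differentiable (by simp) x) j]
  have hsq : ∀ i j : Fin n, pd (pd g j) i x * pd (pd g j) i x = (pd (pd g j) i x) ^ 2 :=
    fun i j => (pow_two _).symm
  calc ∑ i, 2 * ∑ j, (pd (pd g j) i x * pd (pd g j) i x + pd g j x * pd (pd (pd g j) i) i x)
      = 2 * ((∑ i, ∑ j, (pd (pd g j) i x) ^ 2)
        + ∑ i, ∑ j, pd g j x * pd (pd (pd g j) i) i x) := by
        rw [← Finset.mul_sum]
        simp only [Finset.sum_add_distrib, hsq]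
    _ = 2 * (∑ i, ∑ j, (pd (pd g j) i x) ^ 2)
        + 2 * ∑ j, pd g j x * (∑ i, pd (pd (pd g j) i) i x) := by
        rw [mul_add]
        congr 1
        rw [Finset.sum_comm]
        congr 1
        exact Finset.sum_congr rfl fun j _ => (Finset.mul_sum _ _ _).symm
    _ = 2 * (∑ i, ∑ j, (pd (pd g j) i x) ^ 2) + 2 * ∑ j, pd g j x * pd (lap g) j x := by
        congr 1
        rw [Finset.mul_sum, Finset.mul_sum]
        exact Finset.sum_congr rfl fun j _ => by rw [hlapswap j]

end Bochner

section OneVar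

open Filter Topology

lemma deriv_nonneg_of_le_on_Iio {g : ℝ → ℝ} {b : ℝ} (hg : DifferentiableAt ℝ g b)
    (h : ∀ᶠ y in 𝓝[<] b, g y ≤ g b) : 0 ≤ deriv g b := by
  have hs : Tendsto (slope g b) (𝓝[≠] b) (𝓝 (deriv g b)) :=
    hasDerivAt_iff_tendsto_slope.mp hg.hasDerivAt
  have hs' : Tendsto (slope g b) (𝓝[<] b) (𝓝 (deriv g b)) :=
    hs.mono_left (nhdsWithin_mono b fun y hy => ne_of_lt hy)
  have hpos : ∀ᶠ y in 𝓝[<] b, 0 ≤ slope g b y := by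
    filter_upwards [h, self_mem_nhdsWithin] with y hy hy'
    rw [slope_def_field]
    simp only [mem_Iio] at hy'
    exact div_nonneg_iff.mpr (Or.inr ⟨by linarith, by linarith⟩)
  exact ge_of_tendsto hs' hpos

lemma contDiff_deriv_of_contDiff {g : ℝ → ℝ} (hg : ContDiff ℝ (⊤ : ℕ∞) g) :
    ContDiff ℝ (⊤ : ℕ∞) (deriv g) := by
  have h : ContDiff ℝ (⊤ : ℕ∞) (fun x => fderiv ℝ g x 1) :=
    (hg.fderiv_right (by simp)).clm_apply contDiff_const
  have : (fun x => fderiv ℝ g x 1) = deriv g := by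
    funext x; rw [fderiv_apply_one_eq_deriv]
  rwa [this] at h

lemma deriv2_nonpos_of_isLocalMax {g : ℝ → ℝ} {a : ℝ} (hg : ContDiff ℝ (⊤ : ℕ∞) g)
    (h : IsLocalMax g a) : deriv (deriv g) a ≤ 0 := by
  by_contra hc
  push_neg at hc
  have h0 : deriv g a = 0 := h.deriv_eq_zero
  have hcont : ContDiff ℝ (⊤ : ℕ∞) (deriv g) := contDiff_deriv_of_contDiff hg
  have hd : HasDerivAt (deriv g) (deriv (deriv g) a) a :=
    ((hcont.differentiable (by simp)) a).hasDerivAt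
  have hslope : Tendsto (slope (deriv g) a) (𝓝[≠] a) (𝓝 (deriv (deriv g) a)) :=
    hasDerivAt_iff_tendsto_slope.mp hd
  have hs' : Tendsto (slope (deriv g) a) (𝓝[>] a) (𝓝 (deriv (deriv g) a)) :=
    hslope.mono_left (nhdsWithin_mono a fun y hy => ne_of_gt hy)
  have h1 : ∀ᶠ y in 𝓝[>] a, 0 < slope (deriv g) a y := hs'.eventually (lt_mem_nhds hc)
  have h2 : ∀ᶠ y in 𝓝[>] a, 0 < deriv g y := by
    filter_upwards [h1, self_mem_nhdsWithin] with y hy hy'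
    simp only [mem_Ioi] at hy'
    rw [slope_def_field, h0, sub_zero] at hy
    have := mul_pos hy (sub_pos.mpr hy')
    rwa [div_mul_cancel₀ _ (by linarith : y - a ≠ 0)] at this
  have h3 : ∀ᶠ y in 𝓝[>] a, g y ≤ g a := (h.filter_mono nhdsWithin_le_nhds)
  obtain ⟨u, hu, hsub⟩ := mem_nhdsGT_iff_exists_Ioo_subset.mp (h2.and h3)
  simp only [mem_Ioi] at hu
  set b := (a + u) / 2 with hb
  have hab : a < b := by simp only [hb]; linarith
  have hbu : b < u := by simp only [hb]; linarith
  have hmono : StrictMonoOn g (Icc a b) := by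
    apply strictMonoOn_of_deriv_pos (convex_Icc a b) (hg.continuous.continuousOn)
    intro y hy
    rw [interior_Icc] at hy
    exact (hsub ⟨hy.1, lt_trans hy.2 hbu⟩).1
  have hlt : g a < g b :=
    hmono (left_mem_Icc.mpr hab.le) (right_mem_Icc.mpr hab.le) hab
  have hle : g b ≤ g a := (hsub ⟨hab, hbu⟩).2
  linarith

end OneVar

section MaxSpatial

variable {n : ℕ}

lemma hasDerivAt_line (x v : EuclideanSpace ℝ (Fin n)) (r : ℝ) :
    HasDerivAt (fun r : ℝ => x + r • v) v r := by
  simpa using ((hasDerivAt_id r).smul_const v).const_add x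

lemma lap_nonpos_of_isMaxOn {g : EuclideanSpace ℝ (Fin n) → ℝ} (hg : ContDiff ℝ (⊤ : ℕ∞) g)
    {x : EuclideanSpace ℝ (Fin n)} (hmax : ∀ y, g y ≤ g x) : lap g x ≤ 0 := by
  have hterm : ∀ i, pd (pd g i) i x ≤ 0 := by
    intro i
    set v := e n i with hv
    set φ : ℝ → ℝ := fun r => g (x + r • v) with hφdef
    have hline : ContDiff ℝ (⊤ : ℕ∞) (fun r : ℝ => x + r • v) :=
      contDiff_const.add (contDiff_id.smul contDiff_const)
    have hφ : ContDiff ℝ (⊤ : ℕ∞) φ := hg.comp hline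
    have hd1 : deriv φ = fun r => pd g i (x + r • v) := by
      funext r
      have hc : HasDerivAt φ (fderiv ℝ g (x + r • v) v) r :=
        ((hg.differentiable (by simp) _).hasFDerivAt).comp_hasDerivAt r (hasDerivAt_line x v r)
      rw [hc.deriv]; rfl
    have hd2 : deriv (deriv φ) 0 = pd (pd g i) i x := by
      rw [hd1]
      have hc : HasDerivAt (fun r : ℝ => pd g i (x + r • v))
          (fderiv ℝ (pd g i) (x + (0:ℝ) • v) v) (0:ℝ) := by
        have := (((contDiff_pd hg i).differentiable (by simp)
            (x + (0:ℝ) • v)).hasFDerivAt).comp_hasDerivAt (0:ℝ) (hasDerivAt_line x v 0)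
        simpa [Function.comp_def] using this
      rw [hc.deriv]
      simp only [zero_smul, add_zero]
      rfl
    have hmaxφ : IsLocalMax φ 0 := by
      apply Filter.Eventually.of_forall
      intro r
      simpa [hφdef] using hmax (x + r • v)
    have := deriv2_nonpos_of_isLocalMax hφ hmaxφ
    rwa [hd2] at this
  exact Finset.sum_nonpos fun i _ => hterm i

lemma pd_eq_zero_of_isMaxOn {g : EuclideanSpace ℝ (Fin n) → ℝ}
    {x : EuclideanSpace ℝ (Fin n)} (hmax : ∀ y, g y ≤ g x) (i : Fin n) :
    pd g i x = 0 := by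
  have h : IsLocalMax g x := Filter.Eventually.of_forall hmax
  rw [pd, h.fderiv_eq_zero]
  rfl

end MaxSpatial

section Periodic

variable {n : ℕ}

lemma periodic_fderiv {g : EuclideanSpace ℝ (Fin n) → ℝ} (hg : Differentiable ℝ g)
    {c : EuclideanSpace ℝ (Fin n)} (hp : ∀ y, g (y + c) = g y) (x : EuclideanSpace ℝ (Fin n)) :
    fderiv ℝ g (x + c) = fderiv ℝ g x := by
  have h1 : HasFDerivAt (fun y => g (y + c)) (fderiv ℝ g (x + c)) x := by
    have := ((hg (x + c)).hasFDerivAt).comp x ((hasFDerivAt_id x).add_const c)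
    exact this
  have h2 : HasFDerivAt g (fderiv ℝ g (x + c)) x := by
    have heq : (fun y => g (y + c)) = g := funext hp
    rwa [heq] at h1
  rw [h2.fderiv]

lemma periodic_pd {g : EuclideanSpace ℝ (Fin n) → ℝ} (hg : Differentiable ℝ g)
    {c : EuclideanSpace ℝ (Fin n)} (hp : ∀ y, g (y + c) = g y) (i : Fin n)
    (x : EuclideanSpace ℝ (Fin n)) : pd g i (x + c) = pd g i x := by
  rw [pd, pd, periodic_fderiv hg hp x]

end Periodic

section Joint

open Filter Topology

variable {n : ℕ} {v : ℝ → EuclideanSpace ℝ (Fin n) → ℝ} {I : Set ℝ} {t : ℝ}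

lemma joint_contDiffAt (hI : IsOpen I)
    (hv : ContDiffOn ℝ (⊤ : ℕ∞) (Function.uncurry v) (I ×ˢ univ)) (ht : t ∈ I)
    (x : EuclideanSpace ℝ (Fin n)) : ContDiffAt ℝ (⊤ : ℕ∞) (Function.uncurry v) (t, x) :=
  hv.contDiffAt ((hI.prod isOpen_univ).mem_nhds ⟨ht, mem_univ x⟩)

lemma hasFDerivAt_slice_map (t : ℝ) (x : EuclideanSpace ℝ (Fin n)) :
    HasFDerivAt (fun y : EuclideanSpace ℝ (Fin n) => ((t, y) : ℝ × EuclideanSpace ℝ (Fin n)))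
      ((0 : EuclideanSpace ℝ (Fin n) →L[ℝ] ℝ).prod (ContinuousLinearMap.id ℝ _)) x :=
  HasFDerivAt.prodMk (hasFDerivAt_const t x) (hasFDerivAt_id x)

lemma slice_fderiv (hI : IsOpen I)
    (hv : ContDiffOn ℝ (⊤ : ℕ∞) (Function.uncurry v) (I ×ˢ univ)) (ht : t ∈ I)
    (x : EuclideanSpace ℝ (Fin n)) (w : EuclideanSpace ℝ (Fin n)) :
    fderiv ℝ (v t) x w = fderiv ℝ (Function.uncurry v) (t, x) (0, w) := by
  have hdiff : DifferentiableAt ℝ (Function.uncurry v) (t, x) :=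
    (joint_contDiffAt hI hv ht x).differentiableAt (by simp)
  have h := (hdiff.hasFDerivAt).comp x (hasFDerivAt_slice_map t x)
  have h' : HasFDerivAt (v t)
      ((fderiv ℝ (Function.uncurry v) (t, x)).comp
        ((0 : EuclideanSpace ℝ (Fin n) →L[ℝ] ℝ).prod (ContinuousLinearMap.id ℝ _))) x := h
  rw [h'.fderiv]
  simp

lemma slice_hasDerivAt_time (hI : IsOpen I)
    (hv : ContDiffOn ℝ (⊤ : ℕ∞) (Function.uncurry v) (I ×ˢ univ)) (ht : t ∈ I)
    (x : EuclideanSpace ℝ (Fin n)) :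
    HasDerivAt (fun s => v s x) (fderiv ℝ (Function.uncurry v) (t, x) (1, 0)) t := by
  have hdiff : DifferentiableAt ℝ (Function.uncurry v) (t, x) :=
    (joint_contDiffAt hI hv ht x).differentiableAt (by simp)
  have hι : HasDerivAt (fun s : ℝ => ((s, x) : ℝ × EuclideanSpace ℝ (Fin n)))
      ((1 : ℝ), (0 : EuclideanSpace ℝ (Fin n))) t :=
    (hasDerivAt_id t).prodMk (hasDerivAt_const t x)
  exact (hdiff.hasFDerivAt).comp_hasDerivAt t hι

/-- Commuting a time derivative with a space derivative. -/
lemma time_hasDerivAt_pd (hI : IsOpen I)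
    (hv : ContDiffOn ℝ (⊤ : ℕ∞) (Function.uncurry v) (I ×ˢ univ)) (ht : t ∈ I)
    (x : EuclideanSpace ℝ (Fin n)) (w : EuclideanSpace ℝ (Fin n)) :
    HasDerivAt (fun s => fderiv ℝ (v s) x w)
      (fderiv ℝ (fun y => deriv (fun s => v s y) t) x w) t := by
  set V := Function.uncurry v with hV
  set A := fderiv ℝ V with hA
  have hq : ContDiffAt ℝ (⊤ : ℕ∞) V (t, x) := joint_contDiffAt hI hv ht x
  have hAc : ContDiffAt ℝ (⊤ : ℕ∞) A (t, x) := hq.fderiv_right (by simp)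
  have hψ1 : ContDiffAt ℝ (⊤ : ℕ∞) (fun q => A q ((0 : ℝ), w)) (t, x) :=
    hAc.clm_apply contDiffAt_const
  have hψ2 : ContDiffAt ℝ (⊤ : ℕ∞) (fun q => A q ((1 : ℝ), (0 : EuclideanSpace ℝ (Fin n)))) (t, x) :=
    hAc.clm_apply contDiffAt_const
  have hι : HasDerivAt (fun s : ℝ => ((s, x) : ℝ × EuclideanSpace ℝ (Fin n)))
      ((1 : ℝ), (0 : EuclideanSpace ℝ (Fin n))) t :=
    (hasDerivAt_id t).prodMk (hasDerivAt_const t x)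
  -- the eventual equality
  have hev : (fun s => fderiv ℝ (v s) x w) =ᶠ[𝓝 t] (fun s => A (s, x) (0, w)) := by
    filter_upwards [hI.mem_nhds ht] with s hs
    exact slice_fderiv hI hv hs x w
  -- derivative of the substitute function
  have hd : HasDerivAt (fun s => A (s, x) (0, w))
      (fderiv ℝ (fun q => A q ((0 : ℝ), w)) (t, x) (1, 0)) t :=
    by have := ((hψ1.differentiableAt (by simp)).hasFDerivAt).comp_hasDerivAt t hι; exact this
  have hmain : HasDerivAt (fun s => fderiv ℝ (v s) x w)
      (fderiv ℝ (fun q => A q ((0 : ℝ), w)) (t, x) (1, 0)) t :=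
    hd.congr_of_eventuallyEq hev
  -- identify the derivative
  have hDA : DifferentiableAt ℝ A (t, x) := hAc.differentiableAt (by simp)
  have e1 : fderiv ℝ (fun q => A q ((0 : ℝ), w)) (t, x) (1, 0)
      = fderiv ℝ A (t, x) (1, 0) (0, w) := by
    rw [fderiv_clm_apply hDA (differentiableAt_const _)]
    simp
  have e2 : fderiv ℝ A (t, x) (1, 0) (0, w) = fderiv ℝ A (t, x) (0, w) (1, 0) :=
    (hq.isSymmSndFDerivAt (by rw [minSmoothness_of_isRCLikeNormedField]; exact WithTop.coe_le_coe.mpr le_top)).eq _ _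
  have e3 : fderiv ℝ (fun y => deriv (fun s => v s y) t) x w
      = fderiv ℝ A (t, x) (0, w) (1, 0) := by
    have hfun : (fun y => deriv (fun s => v s y) t)
        = fun y => A (t, y) ((1 : ℝ), (0 : EuclideanSpace ℝ (Fin n))) := by
      funext y
      exact (slice_hasDerivAt_time hI hv ht y).deriv
    rw [hfun]
    have hcomp := ((hψ2.differentiableAt (by simp)).hasFDerivAt).comp x (hasFDerivAt_slice_map t x)
    have hcomp' : HasFDerivAt (fun y => A (t, y) ((1 : ℝ), (0 : EuclideanSpace ℝ (Fin n))))
        ((fderiv ℝ (fun q => A q ((1 : ℝ), (0 : EuclideanSpace ℝ (Fin n)))) (t, x)).comp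
          ((0 : EuclideanSpace ℝ (Fin n) →L[ℝ] ℝ).prod (ContinuousLinearMap.id ℝ _))) x := hcomp
    rw [hcomp'.fderiv]
    simp only [ContinuousLinearMap.comp_apply, ContinuousLinearMap.prod_apply,
      ContinuousLinearMap.zero_apply, ContinuousLinearMap.coe_id', id_eq]
    rw [fderiv_clm_apply hDA (differentiableAt_const _)]
    simp
  rw [e3, ← e2, ← e1]
  exact hmain

end Joint

section Slice

variable {n : ℕ} {v : ℝ → EuclideanSpace ℝ (Fin n) → ℝ} {S : Set ℝ} {t : ℝ}

lemma slice_contDiff (hv : ContDiffOn ℝ (⊤ : ℕ∞) (Function.uncurry v) (S ×ˢ univ)) (ht : t ∈ S) :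
    ContDiff ℝ (⊤ : ℕ∞) (v t) := by
  have hmap : ContDiff ℝ (⊤ : ℕ∞) (fun y : EuclideanSpace ℝ (Fin n) => ((t, y) : ℝ × _)) :=
    contDiff_const.prodMk contDiff_id
  have h : ContDiffOn ℝ (⊤ : ℕ∞) (Function.uncurry v ∘ fun y => (t, y)) univ :=
    hv.comp hmap.contDiffOn fun y _ => ⟨ht, mem_univ y⟩
  rw [← contDiffOn_univ]
  exact h

end Slice

section JointCont

variable {n : ℕ} {v : ℝ → EuclideanSpace ℝ (Fin n) → ℝ} {T : ℝ}

lemma uniqueDiffOn_strip (hT : 0 < T) :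
    UniqueDiffOn ℝ (Icc (0:ℝ) T ×ˢ (univ : Set (EuclideanSpace ℝ (Fin n)))) := by
  apply uniqueDiffOn_convex ((convex_Icc _ _).prod convex_univ)
  rw [interior_prod_eq, interior_univ, interior_Icc]
  exact ⟨(T/2, 0), ⟨by constructor <;> linarith, mem_univ _⟩⟩

lemma pd_eq_fderivWithin (hT : 0 < T)
    (hv : ContDiffOn ℝ (⊤ : ℕ∞) (Function.uncurry v) (Icc (0:ℝ) T ×ˢ univ))
    {q : ℝ × EuclideanSpace ℝ (Fin n)} (hq : q ∈ Icc (0:ℝ) T ×ˢ (univ : Set _)) (i : Fin n) :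
    pd (v q.1) i q.2
      = fderivWithin ℝ (Function.uncurry v) (Icc (0:ℝ) T ×ˢ univ) q (0, e n i) := by
  obtain ⟨t, x⟩ := q
  obtain ⟨ht, -⟩ := hq
  set s := Icc (0:ℝ) T ×ˢ (univ : Set (EuclideanSpace ℝ (Fin n))) with hs
  have hL : HasFDerivWithinAt (Function.uncurry v)
      (fderivWithin ℝ (Function.uncurry v) s (t, x)) s (t, x) :=
    ((hv.differentiableOn (by simp)) (t, x) ⟨ht, mem_univ x⟩).hasFDerivWithinAt
  have hι : HasFDerivWithinAt (fun y : EuclideanSpace ℝ (Fin n) => ((t, y) : ℝ × _))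
      ((0 : EuclideanSpace ℝ (Fin n) →L[ℝ] ℝ).prod (ContinuousLinearMap.id ℝ _)) univ x :=
    (hasFDerivAt_slice_map t x).hasFDerivWithinAt
  have hcomp := hL.comp x hι (fun y _ => ⟨ht, mem_univ y⟩)
  have hcomp' : HasFDerivWithinAt (v t)
      ((fderivWithin ℝ (Function.uncurry v) s (t, x)).comp
        ((0 : EuclideanSpace ℝ (Fin n) →L[ℝ] ℝ).prod (ContinuousLinearMap.id ℝ _))) univ x := hcomp
  rw [hasFDerivWithinAt_univ] at hcomp'
  rw [pd, hcomp'.fderiv]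
  simp

lemma continuousOn_pd_joint (hT : 0 < T)
    (hv : ContDiffOn ℝ (⊤ : ℕ∞) (Function.uncurry v) (Icc (0:ℝ) T ×ˢ univ)) (i : Fin n) :
    ContinuousOn (fun q : ℝ × EuclideanSpace ℝ (Fin n) => pd (v q.1) i q.2)
      (Icc (0:ℝ) T ×ˢ univ) := by
  have hcont : ContinuousOn (fderivWithin ℝ (Function.uncurry v) (Icc (0:ℝ) T ×ˢ univ))
      (Icc (0:ℝ) T ×ˢ univ) :=
    hv.continuousOn_fderivWithin (uniqueDiffOn_strip hT) (by simp)
  have h2 : ContinuousOn (fun q : ℝ × EuclideanSpace ℝ (Fin n) =>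
      fderivWithin ℝ (Function.uncurry v) (Icc (0:ℝ) T ×ˢ univ) q (0, e n i))
      (Icc (0:ℝ) T ×ˢ univ) := hcont.clm_apply continuousOn_const
  exact ContinuousOn.congr h2 fun q hq => pd_eq_fderivWithin hT hv hq i

end JointCont

section Torus

variable {n : ℕ}

def Kbox (n : ℕ) : Set (EuclideanSpace ℝ (Fin n)) := {y | ∀ i, y i ∈ Icc (0:ℝ) 1}

lemma isCompact_Kbox : IsCompact (Kbox n) := by
  have h : Kbox n = (EuclideanSpace.equiv (Fin n) ℝ).toHomeomorph ⁻¹'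
      (Set.pi univ fun _ => Icc (0:ℝ) 1) := by
    ext y
    simp [Kbox, Set.mem_pi, EuclideanSpace.equiv, Pi.le_def, forall_and]
  rw [h, Homeomorph.isCompact_preimage]
  exact isCompact_univ_pi fun _ => isCompact_Icc

lemma exists_rep (x : EuclideanSpace ℝ (Fin n)) : ∃ k : Fin n → ℤ,
    (x + (WithLp.equiv 2 (Fin n → ℝ)).symm fun i => ((k i : ℤ) : ℝ)) ∈ Kbox n := by
  refine ⟨fun i => -⌊x i⌋, ?_⟩
  intro i
  have hcoord : (x + (WithLp.equiv 2 (Fin n → ℝ)).symm fun i => (((-⌊x i⌋ : ℤ) : ℝ))) i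
      = x i - ⌊x i⌋ := by
    simp only [PiLp.add_apply, WithLp.equiv_symm_apply, PiLp.toLp_apply, Int.cast_neg]
    ring
  rw [hcoord]
  constructor
  · exact sub_nonneg.mpr (Int.floor_le (x i))
  · have := Int.lt_floor_add_one (x i)
    linarith

end Torus

section GradNorm

variable {n : ℕ}

lemma norm_gradient_sq (g : EuclideanSpace ℝ (Fin n) → ℝ) (x : EuclideanSpace ℝ (Fin n)) :
    ‖gradient g x‖ ^ 2 = Psq g x := by
  have h1 : ∀ w, (inner ℝ (gradient g x) w : ℝ) = fderiv ℝ g x w := by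
    intro w
    unfold gradient
    rw [← InnerProductSpace.toDual_apply_apply, LinearIsometryEquiv.apply_symm_apply]
  have hnorm : ‖gradient g x‖ ^ 2 = ∑ i, (gradient g x i) ^ 2 := by
    rw [EuclideanSpace.norm_eq, Real.sq_sqrt (by positivity)]
    congr 1; funext i
    rw [Real.norm_eq_abs, sq_abs]
  rw [hnorm]
  unfold Psq pd
  apply Finset.sum_congr rfl
  intro i _
  rw [← h1 (e n i)]
  congr 1
  rw [e, EuclideanSpace.inner_single_right]; simp

end GradNorm

end GradEst


/-- Spatial gradient of a time-dependent function on `ℝⁿ`. -/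
def sgrad (n : ℕ) (u : ℝ → EuclideanSpace ℝ (Fin n) → ℝ) (t : ℝ)
    (x : EuclideanSpace ℝ (Fin n)) : EuclideanSpace ℝ (Fin n) :=
  gradient (u t) x

/-- `(i,j)` entry of the spatial Hessian of a time-dependent function on `ℝⁿ`. -/
def shess (n : ℕ) (u : ℝ → EuclideanSpace ℝ (Fin n) → ℝ) (t : ℝ)
    (x : EuclideanSpace ℝ (Fin n)) (i j : Fin n) : ℝ :=
  fderiv ℝ (fun y => fderiv ℝ (u t) y (e n j)) x (e n i)

/-- Spatial Laplacian (trace of the spatial Hessian). -/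
def slap (n : ℕ) (u : ℝ → EuclideanSpace ℝ (Fin n) → ℝ) (t : ℝ)
    (x : EuclideanSpace ℝ (Fin n)) : ℝ :=
  ∑ i, shess n u t x i i

/-- Squared Frobenius norm of the spatial Hessian. -/
def hessSq (n : ℕ) (u : ℝ → EuclideanSpace ℝ (Fin n) → ℝ) (t : ℝ)
    (x : EuclideanSpace ℝ (Fin n)) : ℝ :=
  ∑ i, ∑ j, (shess n u t x i j) ^ 2

/-- Time derivative of a time-dependent function on `ℝⁿ`. -/
def tderiv (n : ℕ) (u : ℝ → EuclideanSpace ℝ (Fin n) → ℝ) (t : ℝ)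
    (x : EuclideanSpace ℝ (Fin n)) : ℝ :=
  deriv (fun s => u s x) t

open GradEst Filter Topology

/-- Theorem 6.2 on the flat torus: gradient estimate for
`∂_t f = Δf − γ(t) f log f` with a smooth positive coefficient `γ`. -/
theorem gradient_estimate_time_dependent_gamma_torus (n : ℕ) (hn : 1 ≤ n)
    (T : ℝ) (hT : 0 < T) (γ : ℝ → ℝ)
    (hγs : ContDiffOn ℝ (⊤ : ℕ∞) γ (Icc (0 : ℝ) T))
    (hγ : ∀ t ∈ Icc (0 : ℝ) T, 0 < γ t)
    (f : ℝ → EuclideanSpace ℝ (Fin n) → ℝ)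
    (hf : ContDiffOn ℝ (⊤ : ℕ∞) (Function.uncurry f)
      (Icc (0 : ℝ) T ×ˢ (univ : Set (EuclideanSpace ℝ (Fin n)))))
    (hpos : ∀ t ∈ Icc (0 : ℝ) T, ∀ x, 0 < f t x)
    (hlt : ∀ t ∈ Icc (0 : ℝ) T, ∀ x, f t x < 1)
    (hper : ∀ t ∈ Icc (0 : ℝ) T, ∀ x, ∀ k : Fin n → ℤ,
      f t (x + (WithLp.equiv 2 (Fin n → ℝ)).symm fun i => (k i : ℝ)) = f t x)
    (hpde : ∀ t ∈ Icc (0 : ℝ) T, ∀ x,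
      tderiv n f t x = slap n f t x - γ t * f t x * Real.log (f t x)) :
    ∀ t ∈ Ioc (0 : ℝ) T, ∀ x,
      ‖sgrad n (fun s y => Real.log (f s y)) t x‖ ^ 2
        + Real.log (f t x) / t ≤ 0 := by
  classical
  set u : ℝ → EuclideanSpace ℝ (Fin n) → ℝ := fun s y => Real.log (f s y) with hu
  -- basic smoothness facts
  have hfslice : ∀ t ∈ Icc (0:ℝ) T, ContDiff ℝ (⊤ : ℕ∞) (f t) := fun t ht => slice_contDiff hf ht
  have huU : ContDiffOn ℝ (⊤ : ℕ∞) (Function.uncurry u) (Icc (0:ℝ) T ×ˢ univ) := by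
    exact hf.log fun q hq => (hpos q.1 hq.1 q.2).ne'
  have huslice : ∀ t ∈ Icc (0:ℝ) T, ContDiff ℝ (⊤ : ℕ∞) (u t) := fun t ht => slice_contDiff huU ht
  have hIoosub : (Ioo (0:ℝ) T ×ˢ (univ : Set (EuclideanSpace ℝ (Fin n)))) ⊆ (Icc (0:ℝ) T ×ˢ univ) :=
    Set.prod_mono Ioo_subset_Icc_self (subset_refl _)
  have hfIoo : ContDiffOn ℝ (⊤ : ℕ∞) (Function.uncurry f) (Ioo (0:ℝ) T ×ˢ univ) := hf.mono hIoosub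
  have huIoo : ContDiffOn ℝ (⊤ : ℕ∞) (Function.uncurry u) (Ioo (0:ℝ) T ×ˢ univ) := huU.mono hIoosub
  -- PDE for u = log f at interior times
  have hPDEu : ∀ t ∈ Ioo (0:ℝ) T, ∀ x : EuclideanSpace ℝ (Fin n), deriv (fun s => u s x) t
      = lap (u t) x + Psq (u t) x - γ t * u t x := by
    intro t ht x
    have htIcc : t ∈ Icc (0:ℝ) T := Ioo_subset_Icc_self ht
    have hft := hfslice t htIcc
    have hfpos : ∀ y, 0 < f t y := hpos t htIcc
    have hfd : HasDerivAt (fun s => f s x) (fderiv ℝ (Function.uncurry f) (t, x) (1, 0)) t :=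
      slice_hasDerivAt_time isOpen_Ioo hfIoo ht x
    have htd : tderiv n f t x = fderiv ℝ (Function.uncurry f) (t, x) (1, 0) := hfd.deriv
    have hud : HasDerivAt (fun s => u s x)
        (fderiv ℝ (Function.uncurry f) (t, x) (1, 0) / f t x) t :=
      hfd.log (hfpos x).ne'
    rw [hud.deriv]
    have hpde' := hpde t htIcc x
    rw [htd] at hpde'
    rw [hpde']
    have hslap : slap n f t x = lap (f t) x := rfl
    have hlap' : lap (u t) x = (f t x)⁻¹ * lap (f t) x - ((f t x)⁻¹) ^ 2 * Psq (f t) x :=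
      lap_log hft hfpos x
    have hPsq' : Psq (u t) x = ((f t x)⁻¹) ^ 2 * Psq (f t) x := Psq_log hft hfpos x
    rw [hslap, hlap', hPsq']
    have hux : u t x = Real.log (f t x) := rfl
    rw [hux]
    have hf0 : f t x ≠ 0 := (hfpos x).ne'
    field_simp
    ring
  -- the Harnack quantity
  set G : ℝ → EuclideanSpace ℝ (Fin n) → ℝ := fun t x => t * Psq (u t) x + u t x with hG
  -- continuity of G on the strip
  have hGcont : ContinuousOn (fun q : ℝ × EuclideanSpace ℝ (Fin n) => G q.1 q.2) (Icc (0:ℝ) T ×ˢ univ) := by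
    apply ContinuousOn.add
    · apply ContinuousOn.mul (continuous_fst.continuousOn)
      have hrw : (fun q : ℝ × EuclideanSpace ℝ (Fin n) => Psq (u q.1) q.2)
          = fun q : ℝ × EuclideanSpace ℝ (Fin n) => ∑ i, (pd (u q.1) i q.2) ^ 2 := rfl
      rw [hrw]
      apply continuousOn_finset_sum
      intro i _
      exact (continuousOn_pd_joint hT huU i).pow 2
    · exact huU.continuousOn
  -- periodicity of G in space
  have hper_G : ∀ t ∈ Icc (0:ℝ) T, ∀ (x : EuclideanSpace ℝ (Fin n)) (k : Fin n → ℤ),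
      G t (x + (WithLp.equiv 2 (Fin n → ℝ)).symm fun i => (k i : ℝ)) = G t x := by
    intro t ht x k
    set c : EuclideanSpace ℝ (Fin n) := (WithLp.equiv 2 (Fin n → ℝ)).symm fun i => (k i : ℝ) with hc
    have hpc : ∀ y, u t (y + c) = u t y := fun y => congrArg Real.log (hper t ht y k)
    have hud : Differentiable ℝ (u t) := (huslice t ht).differentiable (by simp)
    have hpd : ∀ (i : Fin n) (y : EuclideanSpace ℝ (Fin n)), pd (u t) i (y + c) = pd (u t) i y :=
      fun i y => periodic_pd hud hpc i y
    simp only [hG]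
    rw [hpc x]
    congr 2
    unfold Psq
    exact Finset.sum_congr rfl fun i _ => by rw [hpd i x]
  -- the key estimate up to any T' < T
  have hkey : ∀ T' : ℝ, 0 < T' → T' < T → ∀ t ∈ Ioc (0:ℝ) T', ∀ x : EuclideanSpace ℝ (Fin n), G t x ≤ 0 := by
    intro T' hT'0 hT'T
    have hsub : (Icc (0:ℝ) T' ×ˢ (Kbox n : Set (EuclideanSpace ℝ (Fin n)))) ⊆ Icc (0:ℝ) T ×ˢ univ :=
      Set.prod_mono (Icc_subset_Icc le_rfl hT'T.le) (subset_univ _)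
    have hIccsub : Icc (0:ℝ) T' ⊆ Icc (0:ℝ) T := Icc_subset_Icc le_rfl hT'T.le
    have hcomp : IsCompact (Icc (0:ℝ) T' ×ˢ (Kbox n : Set (EuclideanSpace ℝ (Fin n)))) :=
      isCompact_Icc.prod isCompact_Kbox
    have hne : (Icc (0:ℝ) T' ×ˢ (Kbox n : Set (EuclideanSpace ℝ (Fin n)))).Nonempty := by
      refine ⟨(0, 0), ⟨left_mem_Icc.mpr hT'0.le, ?_⟩⟩
      intro i
      constructor <;> simp
    obtain ⟨q₀, hq₀, hmax⟩ := hcomp.exists_isMaxOn hne (hGcont.mono hsub)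
    obtain ⟨t₀, x₀⟩ := q₀
    simp only [Set.mem_prod] at hq₀
    obtain ⟨ht₀Icc', hx₀K⟩ := hq₀
    set M := G t₀ x₀ with hM
    have hred : ∀ t ∈ Icc (0:ℝ) T', ∀ x : EuclideanSpace ℝ (Fin n), G t x ≤ M := by
      intro t ht x
      obtain ⟨k, hk⟩ := exists_rep x
      calc G t x
          = G t (x + (WithLp.equiv 2 (Fin n → ℝ)).symm fun i => (k i : ℝ)) :=
            (hper_G t (hIccsub ht) x k).symm
        _ ≤ M := hmax (show ((t, x + (WithLp.equiv 2 (Fin n → ℝ)).symm fun i => (k i : ℝ)))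
            ∈ Icc (0:ℝ) T' ×ˢ (Kbox n) from ⟨ht, hk⟩)
    by_cases hMle : M ≤ 0
    · intro t ht x
      exact le_trans (hred t ⟨ht.1.le, ht.2⟩ x) hMle
    exfalso
    push_neg at hMle
    -- t₀ > 0
    have ht₀0 : 0 < t₀ := by
      rcases ht₀Icc'.1.lt_or_eq with h | h
      · exact h
      · exfalso
        have h0Icc : (0:ℝ) ∈ Icc (0:ℝ) T := left_mem_Icc.mpr hT.le
        have : G t₀ x₀ = Real.log (f 0 x₀) := by
          rw [← h]; simp [hG, hu]
        have hlog : Real.log (f 0 x₀) < 0 :=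
          Real.log_neg (hpos 0 h0Icc x₀) (hlt 0 h0Icc x₀)
        rw [← hM] at this
        linarith
    have ht₀Ioo : t₀ ∈ Ioo (0:ℝ) T := ⟨ht₀0, lt_of_le_of_lt ht₀Icc'.2 hT'T⟩
    have ht₀Icc : t₀ ∈ Icc (0:ℝ) T := Ioo_subset_Icc_self ht₀Ioo
    set g : EuclideanSpace ℝ (Fin n) → ℝ := u t₀ with hgdef
    have hg : ContDiff ℝ (⊤ : ℕ∞) g := huslice t₀ ht₀Icc
    -- spatial global max
    have hxmax : ∀ y : EuclideanSpace ℝ (Fin n), (fun y => t₀ * Psq g y + g y) y ≤ (fun y => t₀ * Psq g y + g y) x₀ :=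
      fun y => hred t₀ ht₀Icc' y
    have hGt₀smooth : ContDiff ℝ (⊤ : ℕ∞) (fun y => t₀ * Psq g y + g y) :=
      ((contDiff_const.mul (contDiff_Psq hg)).add hg)
    -- first order condition
    have hfirst : ∀ i : Fin n, t₀ * pd (Psq g) i x₀ + pd g i x₀ = 0 := by
      intro i
      have h0 := pd_eq_zero_of_isMaxOn hxmax i
      rwa [pd_const_mul_add t₀ ((contDiff_Psq hg).differentiable (by simp) x₀)
        (hg.differentiable (by simp) x₀) i] at h0
    -- second order condition
    have hsecond : t₀ * lap (Psq g) x₀ + lap g x₀ ≤ 0 := by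
      have h0 := lap_nonpos_of_isMaxOn hGt₀smooth hxmax
      rwa [lap_const_mul_add t₀ (contDiff_Psq hg) hg x₀] at h0
    -- Bochner
    have hboch : lap (Psq g) x₀ = 2 * (∑ i, ∑ j, (pd (pd g j) i x₀) ^ 2)
        + 2 * ∑ j, pd g j x₀ * pd (lap g) j x₀ := lap_Psq hg x₀
    -- time derivative machinery
    set w : EuclideanSpace ℝ (Fin n) → ℝ := fun y => deriv (fun s => u s y) t₀ with hwdef
    have hwfun : w = fun y => lap g y + Psq g y - γ t₀ * g y := by
      funext y
      exact hPDEu t₀ ht₀Ioo y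
    have hwsmooth : ContDiff ℝ (⊤ : ℕ∞) w := by
      rw [hwfun]
      exact ((contDiff_lap hg).add (contDiff_Psq hg)).sub (contDiff_const.mul hg)
    have hpdt : ∀ i : Fin n, HasDerivAt (fun s => pd (u s) i x₀) (pd w i x₀) t₀ :=
      fun i => time_hasDerivAt_pd isOpen_Ioo huIoo ht₀Ioo x₀ (e n i)
    have hPt : HasDerivAt (fun s => Psq (u s) x₀)
        (∑ i, 2 * pd g i x₀ ^ 1 * pd w i x₀) t₀ := by
      have h : HasDerivAt (fun s => ∑ i, (pd (u s) i x₀) ^ 2)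
          (∑ i, 2 * pd g i x₀ ^ 1 * pd w i x₀) t₀ := by
        apply HasDerivAt.fun_sum
        intro i _
        simpa using (hpdt i).fun_pow 2
      exact h
    have hut : HasDerivAt (fun s => u s x₀) (w x₀) t₀ := by
      have h := slice_hasDerivAt_time isOpen_Ioo huIoo ht₀Ioo x₀
      have hval : w x₀ = fderiv ℝ (Function.uncurry u) (t₀, x₀) (1, 0) := h.deriv
      rwa [← hval] at h
    have hGt : HasDerivAt (fun s => G s x₀)
        (1 * Psq g x₀ + t₀ * (∑ i, 2 * pd g i x₀ ^ 1 * pd w i x₀) + w x₀) t₀ :=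
      (((hasDerivAt_id t₀).mul hPt).add hut)
    -- the time derivative is nonnegative at the max
    have hderiv_nonneg : 0 ≤ 1 * Psq g x₀
        + t₀ * (∑ i, 2 * pd g i x₀ ^ 1 * pd w i x₀) + w x₀ := by
      rw [← hGt.deriv]
      apply deriv_nonneg_of_le_on_Iio hGt.differentiableAt
      have hIoo_mem : Ioo (0:ℝ) t₀ ∈ 𝓝[<] t₀ :=
        Ioo_mem_nhdsLT_of_mem ⟨ht₀0, le_refl t₀⟩
      filter_upwards [hIoo_mem] with s hs
      exact hred s ⟨hs.1.le, le_trans hs.2.le ht₀Icc'.2⟩ x₀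
    -- identify pd w
    have hDi : ∀ i : Fin n, pd w i x₀ = pd (lap g) i x₀ + pd (Psq g) i x₀ - γ t₀ * pd g i x₀ := by
      intro i
      have hh : HasFDerivAt (fun y => lap g y + Psq g y - γ t₀ * g y)
          (fderiv ℝ (lap g) x₀ + fderiv ℝ (Psq g) x₀ - γ t₀ • fderiv ℝ g x₀) x₀ := by
        exact (((contDiff_lap hg).differentiable (by simp) x₀).hasFDerivAt.add
          (((contDiff_Psq hg).differentiable (by simp) x₀).hasFDerivAt)).sub
          (((hg.differentiable (by simp) x₀).hasFDerivAt).const_mul (γ t₀))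
      rw [hwfun, pd_eq hh]
      simp [pd]
    -- numerics
    set P₀ := Psq g x₀ with hP₀def
    set Lp := lap g x₀ with hLpdef
    set uv := g x₀ with huvdef
    set γ₀ := γ t₀ with hγ₀def
    set S1 := ∑ j, pd g j x₀ * pd (lap g) j x₀ with hS1def
    set S2 := ∑ j, pd g j x₀ * pd (Psq g) j x₀ with hS2def
    set HSQ := ∑ i, ∑ j, (pd (pd g j) i x₀) ^ 2 with hHSQdef
    have hγ₀pos : 0 < γ₀ := hγ t₀ ht₀Icc
    have hP₀nonneg : 0 ≤ P₀ := Finset.sum_nonneg fun i _ => sq_nonneg _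
    have hHSQnonneg : 0 ≤ HSQ :=
      Finset.sum_nonneg fun i _ => Finset.sum_nonneg fun j _ => sq_nonneg _
    have hMval : M = t₀ * P₀ + uv := rfl
    have hwx₀ : w x₀ = Lp + P₀ - γ₀ * uv := by rw [hwfun]
    -- sum simplifications
    have hsum1 : ∑ i, 2 * pd g i x₀ ^ 1 * pd w i x₀
        = 2 * S1 + 2 * S2 - 2 * γ₀ * P₀ := by
      have : ∀ i : Fin n, 2 * pd g i x₀ ^ 1 * pd w i x₀
          = 2 * (pd g i x₀ * pd (lap g) i x₀) + 2 * (pd g i x₀ * pd (Psq g) i x₀)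
            - 2 * γ₀ * (pd g i x₀) ^ 2 := by
        intro i
        rw [hDi i]
        ring
      rw [Finset.sum_congr rfl fun i _ => this i]
      rw [Finset.sum_sub_distrib, Finset.sum_add_distrib, ← Finset.mul_sum, ← Finset.mul_sum,
        ← Finset.mul_sum]
      have : Psq g x₀ = ∑ i, (pd g i x₀) ^ 2 := rfl
      rw [hS1def, hS2def, hP₀def, this]
    have hsum2 : t₀ * S2 = -P₀ := by
      have : ∀ i : Fin n, t₀ * (pd g i x₀ * pd (Psq g) i x₀) = -(pd g i x₀) ^ 2 := by
        intro i
        have h := hfirst i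
        have : t₀ * pd (Psq g) i x₀ = -pd g i x₀ := by linarith
        calc t₀ * (pd g i x₀ * pd (Psq g) i x₀) = pd g i x₀ * (t₀ * pd (Psq g) i x₀) := by ring
          _ = pd g i x₀ * (-pd g i x₀) := by rw [this]
          _ = -(pd g i x₀) ^ 2 := by ring
      rw [hS2def, Finset.mul_sum, Finset.sum_congr rfl fun i _ => this i, Finset.sum_neg_distrib]
      rw [hP₀def]
      rfl
    -- final contradiction
    have hq1 : 0 ≤ P₀ + t₀ * (2 * S1 + 2 * S2 - 2 * γ₀ * P₀) + (Lp + P₀ - γ₀ * uv) := by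
      have := hderiv_nonneg
      rw [hsum1, hwx₀] at this
      linarith
    have hq2 : t₀ * (2 * HSQ + 2 * S1) + Lp ≤ 0 := by
      rw [hboch] at hsecond
      exact hsecond
    have hq3 : γ₀ * uv = γ₀ * M - γ₀ * (t₀ * P₀) := by rw [hMval]; ring
    have hq4 : 0 ≤ γ₀ * (t₀ * P₀) :=
      mul_nonneg hγ₀pos.le (mul_nonneg ht₀0.le hP₀nonneg)
    have hq5 : 0 ≤ t₀ * HSQ := mul_nonneg ht₀0.le hHSQnonneg
    have hq6 : 0 < γ₀ * M := mul_pos hγ₀pos hMle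
    -- linear arithmetic over monomials
    ring_nf at hq1 hq2 hq3 hsum2
    nlinarith [hq1, hq2, hq3, hsum2, hq4, hq5, hq6]
  -- wrap up: all interior times, then t = T by continuity
  have hG0 : ∀ t ∈ Ioc (0:ℝ) T, ∀ x : EuclideanSpace ℝ (Fin n), G t x ≤ 0 := by
    intro t ht x
    rcases lt_or_eq_of_le ht.2 with hlt' | heq
    · exact hkey t ht.1 hlt' t ⟨ht.1, le_rfl⟩ x
    · rw [heq]
      have hmapsto : MapsTo (fun s : ℝ => ((s, x) : ℝ × EuclideanSpace ℝ (Fin n))) (Icc (0:ℝ) T)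
          (Icc (0:ℝ) T ×ˢ univ) := fun s hs => ⟨hs, mem_univ x⟩
      have hcont1 : ContinuousOn (fun s => G s x) (Icc (0:ℝ) T) :=
        hGcont.comp ((continuous_id.prodMk continuous_const).continuousOn) hmapsto
      have hNB : (𝓝[Ioo (0:ℝ) T] T).NeBot := by
        apply mem_closure_iff_nhdsWithin_neBot.mp
        rw [closure_Ioo (ne_of_lt hT)]
        exact right_mem_Icc.mpr hT.le
      have htends : Tendsto (fun s => G s x) (𝓝[Ioo (0:ℝ) T] T) (𝓝 (G T x)) :=
        (hcont1 T (right_mem_Icc.mpr hT.le)).mono Ioo_subset_Icc_self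
      have hev : ∀ᶠ s in 𝓝[Ioo (0:ℝ) T] T, G s x ≤ 0 := by
        filter_upwards [self_mem_nhdsWithin] with s hs
        exact hkey s hs.1 hs.2 s ⟨hs.1, le_rfl⟩ x
      exact le_of_tendsto htends hev
  -- final inequality
  intro t ht x
  have hnorm : ‖sgrad n (fun s y => Real.log (f s y)) t x‖ ^ 2 = Psq (u t) x :=
    norm_gradient_sq (u t) x
  rw [hnorm]
  have hGle := hG0 t ht x
  have htpos : 0 < t := ht.1
  have hux : Real.log (f t x) = u t x := rfl
  rw [hux]
  have hGle' : t * Psq (u t) x + u t x ≤ 0 := hGle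
  have heq : Psq (u t) x + u t x / t = (t * Psq (u t) x + u t x) / t := by
    field_simp
  rw [heq]
  exact div_nonpos_of_nonpos_of_nonneg hGle' htpos.le
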